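/- arXiv:2502.01232 — 4 statements merged into one kernel-verified Lean document; each statement's English description precedes it below -/
import Mathlib

section
/- Fix a first-order language L, a type α of variables with DecidableEq α, and a nonempty L-structure M. Let h : L.Formula α and let S T : Finset (L.Formula α) with S ⊆ T. Suppose the rule (h, S) is reducible, i.e. there exists l ∈ S that is captured in (h, S) (meaning l.freeVarFinset ⊆ (S.erase l).biUnion freeVarFinset ∪ h.freeVarFinset) and such that for every assignment v : α → M, if every φ ∈ S.erase l satisfies φ.Realize v, then l.Realize v. Then the rule (h, T) is reducible, i.e. there exists l' ∈ T captured in (h, T) such that for every assignment v : α → M, if every φ ∈ T.erase l' satisfies φ.Realize v, then l'.Realize v. -/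
open FirstOrder Language

/-- Proposition 1 (reducible specialisations): every body-superset of a
reducible rule is reducible. -/
theorem reducible_specialisation {L : FirstOrder.Language} {α : Type*} [DecidableEq α] [DecidableEq (L.Formula α)]
    {M : Type*} [Nonempty M] [L.Structure M]
    (h : L.Formula α) (S T : Finset (L.Formula α)) (hST : S ⊆ T)
    (hred : ∃ l ∈ S,
      BoundedFormula.freeVarFinset l ⊆
        (S.erase l).biUnion (fun φ => BoundedFormula.freeVarFinset φ) ∪
          BoundedFormula.freeVarFinset h ∧
      ∀ v : α → M, (∀ φ ∈ S.erase l, φ.Realize v) → l.Realize v) :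
    ∃ l' ∈ T,
      BoundedFormula.freeVarFinset l' ⊆
        (T.erase l').biUnion (fun φ => BoundedFormula.freeVarFinset φ) ∪
          BoundedFormula.freeVarFinset h ∧
      ∀ v : α → M, (∀ φ ∈ T.erase l', φ.Realize v) → l'.Realize v := by
  obtain ⟨l, hlS, hcap, hent⟩ := hred
  have hsub : S.erase l ⊆ T.erase l := Finset.erase_subset_erase _ hST
  refine ⟨l, hST hlS, ?_, fun v hv => hent v (fun φ hφ => hv φ (hsub hφ))⟩
  exact hcap.trans (Finset.union_subset_union_left (Finset.biUnion_subset_biUnion_of_subset_left _ hsub))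
end

section
/- Fix a first-order language L, a type α of variables with DecidableEq α, and a nonempty L-structure M. Let N : Set (α → M) be a set of assignments (the negative examples). Let h : L.Formula α and let S T : Finset (L.Formula α) with S ⊆ T. Suppose the rule (h, S) is indiscriminate with respect to N, i.e. there exists l ∈ S that is captured in (h, S) (meaning l.freeVarFinset ⊆ (S.erase l).biUnion freeVarFinset ∪ h.freeVarFinset) and such that for every e ∈ N and every assignment v : α → M with v x = e x for all x ∈ h.freeVarFinset, if every φ ∈ S.erase l satisfies φ.Realize v, then l.Realize v. Then the rule (h, T) is indiscriminate with respect to N, i.e. there exists l' ∈ T captured in (h, T) such that for every e ∈ N and every assignment v agreeing with e on h.freeVarFinset, if every φ ∈ T.erase l' satisfies φ.Realize v, then l'.Realize v. -/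
open FirstOrder Language

/-- Proposition 3 (indiscriminate specialisations): every body-superset of an
indiscriminate rule is indiscriminate with respect to the same set of
negative examples. -/
theorem indiscriminate_specialisation {L : FirstOrder.Language} {α : Type*}
    [DecidableEq α] [DecidableEq (L.Formula α)]
    {M : Type*} [Nonempty M] [L.Structure M]
    (N : Set (α → M))
    (h : L.Formula α) (S T : Finset (L.Formula α)) (hST : S ⊆ T)
    (hind : ∃ l ∈ S,
      BoundedFormula.freeVarFinset l ⊆
        (S.erase l).biUnion (fun φ => BoundedFormula.freeVarFinset φ) ∪
          BoundedFormula.freeVarFinset h ∧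
      ∀ e ∈ N, ∀ v : α → M, (∀ x ∈ BoundedFormula.freeVarFinset h, v x = e x) →
        (∀ φ ∈ S.erase l, φ.Realize v) → l.Realize v) :
    ∃ l' ∈ T,
      BoundedFormula.freeVarFinset l' ⊆
        (T.erase l').biUnion (fun φ => BoundedFormula.freeVarFinset φ) ∪
          BoundedFormula.freeVarFinset h ∧
      ∀ e ∈ N, ∀ v : α → M, (∀ x ∈ BoundedFormula.freeVarFinset h, v x = e x) →
        (∀ φ ∈ T.erase l', φ.Realize v) → l'.Realize v := by
  obtain ⟨l, hlS, hcap, hreal⟩ := hind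
  refine ⟨l, hST hlS, ?_, ?_⟩
  · exact hcap.trans (Finset.union_subset_union_left
      (Finset.biUnion_subset_biUnion_of_subset_left _ (Finset.erase_subset_erase _ hST)))
  · intro e he v hv hT
    exact hreal e he v hv fun φ hφ => hT φ (Finset.erase_subset_erase _ hST hφ)
end

section
/- Fix a first-order language L, a type α of variables with DecidableEq α, and a nonempty L-structure M. Let h : L.Formula α and S : Finset (L.Formula α). Say that the rule (h, S) covers an example e : α → M if there exists an assignment v : α → M with v x = e x for all x ∈ h.freeVarFinset such that every φ ∈ S satisfies φ.Realize v. Let E⁺ E⁻ : Finset (α → M) be finite sets of positive and negative examples, and define the cost of a rule (h, S) as the pair (fn + fp, 1 + S.card), where fn is the number of e ∈ E⁺ not covered by (h, S) and fp is the number of e ∈ E⁻ covered by (h, S), pairs being compared by the lexicographic order Prod.Lex (<) (<) on ℕ × ℕ. Suppose (h, S) is reducible, i.e. there exists l ∈ S that is captured in (h, S) (meaning l.freeVarFinset ⊆ (S.erase l).biUnion freeVarFinset ∪ h.freeVarFinset) and such that for every assignment v : α → M, if every φ ∈ S.erase l satisfies φ.Realize v, then l.Realize v. Then the cost of (h, S.erase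 l) is strictly smaller than the cost of (h, S) in the lexicographic order. -/
open FirstOrder Language

open scoped Classical

/-- A rule `(h, S)` covers an example `e` if some assignment agreeing with `e`
on the free variables of the head realizes every body formula. -/
def RuleCovers {L : FirstOrder.Language} {α : Type*} [DecidableEq α]
    {M : Type*} [L.Structure M]
    (h : L.Formula α) (S : Finset (L.Formula α)) (e : α → M) : Prop :=
  ∃ v : α → M, (∀ x ∈ BoundedFormula.freeVarFinset h, v x = e x) ∧
    ∀ φ ∈ S, φ.Realize v

/-- The cost of a rule `(h, S)`: misclassified examples (false negatives plus
false positives) paired with its size `1 + S.card`. -/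
noncomputable def ruleCost {L : FirstOrder.Language} {α : Type*} [DecidableEq α]
    {M : Type*} [L.Structure M]
    (h : L.Formula α) (S : Finset (L.Formula α))
    (Epos Eneg : Finset (α → M)) : ℕ × ℕ :=
  ((Epos.filter fun e => ¬ RuleCovers h S e).card +
      (Eneg.filter fun e => RuleCovers h S e).card,
    1 + S.card)

/-- Single-rule form of Proposition 2 (reducible soundness): deleting the
implied captured literal of a reducible rule strictly decreases the cost in
the lexicographic order. -/
theorem reducible_not_optimal {L : FirstOrder.Language} {α : Type*}
    [DecidableEq α] [DecidableEq (L.Formula α)]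
    {M : Type*} [Nonempty M] [L.Structure M]
    (h : L.Formula α) (S : Finset (L.Formula α))
    (Epos Eneg : Finset (α → M))
    (l : L.Formula α) (hl : l ∈ S)
    (hcap : BoundedFormula.freeVarFinset l ⊆
      (S.erase l).biUnion (fun φ => BoundedFormula.freeVarFinset φ) ∪
        BoundedFormula.freeVarFinset h)
    (himp : ∀ v : α → M, (∀ φ ∈ S.erase l, φ.Realize v) → l.Realize v) :
    Prod.Lex (· < ·) (· < ·) (ruleCost h (S.erase l) Epos Eneg)
      (ruleCost h S Epos Eneg) := by
  have hcov : ∀ e : α → M, RuleCovers h (S.erase l) e ↔ RuleCovers h S e := by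
    intro e
    constructor
    · rintro ⟨v, hv, hall⟩
      refine ⟨v, hv, fun φ hφ => ?_⟩
      by_cases hφl : φ = l
      · subst hφl; exact himp v hall
      · exact hall φ (Finset.mem_erase.mpr ⟨hφl, hφ⟩)
    · rintro ⟨v, hv, hall⟩
      exact ⟨v, hv, fun φ hφ => hall φ (Finset.mem_of_mem_erase hφ)⟩
  have h1 : (Epos.filter fun e => ¬ RuleCovers h (S.erase l) e).card +
      (Eneg.filter fun e => RuleCovers h (S.erase l) e).card =
      (Epos.filter fun e => ¬ RuleCovers h S e).card +
      (Eneg.filter fun e => RuleCovers h S e).card := by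
    congr 1 <;> [skip; skip] <;>
      · congr 1
        apply Finset.filter_congr
        intro e _
        simp [hcov e]
  unfold ruleCost
  rw [h1]
  exact Prod.Lex.right _ (by
    have := Finset.card_erase_lt_of_mem hl
    omega)
end

section
/- Fix a first-order language L, a type α of variables with DecidableEq α, and a nonempty L-structure M. Let h : L.Formula α and S : Finset (L.Formula α). Say that the rule (h, S) covers an example e : α → M if there exists an assignment v : α → M with v x = e x for all x ∈ h.freeVarFinset such that every φ ∈ S satisfies φ.Realize v. Let E⁺ E⁻ : Finset (α → M) be finite sets of positive and negative examples, and define the cost of a rule (h, S) as the pair (fn + fp, 1 + S.card), where fn is the number of e ∈ E⁺ not covered by (h, S) and fp is the number of e ∈ E⁻ covered by (h, S), pairs being compared by the lexicographic order Prod.Lex (<) (<) on ℕ × ℕ. Suppose (h, S) is indiscriminate with respect to E⁻, i.e. there exists l ∈ S that is captured in (h, S) (meaning l.freeVarFinset ⊆ (S.erase l).biUnion freeVarFinset ∪ h.freeVarFinset) and such that for every e ∈ E⁻ and every assignment v agreeing with e on h.freeVarFinset, if every φ ∈ S.erase l satisfies φ.Realize v, then l.Realize v. Then the cost of (h, S.erase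 l) is strictly smaller than the cost of (h, S) in the lexicographic order. -/
open FirstOrder Language

open scoped Classical

/-- Single-rule form of Proposition 4 (indiscriminate soundness): deleting
the indiscriminate captured literal strictly decreases the cost in the
lexicographic order. -/
theorem indiscriminate_not_optimal {L : FirstOrder.Language} {α : Type*}
    [DecidableEq α] [DecidableEq (L.Formula α)]
    {M : Type*} [Nonempty M] [L.Structure M]
    (h : L.Formula α) (S : Finset (L.Formula α))
    (Epos Eneg : Finset (α → M))
    (l : L.Formula α) (hl : l ∈ S)
    (hcap : BoundedFormula.freeVarFinset l ⊆
      (S.erase l).biUnion (fun φ => BoundedFormula.freeVarFinset φ) ∪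
        BoundedFormula.freeVarFinset h)
    (himp : ∀ e ∈ Eneg, ∀ v : α → M,
      (∀ x ∈ BoundedFormula.freeVarFinset h, v x = e x) →
      (∀ φ ∈ S.erase l, φ.Realize v) → l.Realize v) :
    Prod.Lex (· < ·) (· < ·) (ruleCost h (S.erase l) Epos Eneg)
      (ruleCost h S Epos Eneg) := by
  have hmono : ∀ e : α → M, RuleCovers h S e → RuleCovers h (S.erase l) e := by
    rintro e ⟨v, hv, hall⟩
    exact ⟨v, hv, fun φ hφ => hall φ (Finset.mem_of_mem_erase hφ)⟩
  have hfp : (Eneg.filter fun e => RuleCovers h (S.erase l) e) =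
      (Eneg.filter fun e => RuleCovers h S e) := by
    apply Finset.filter_congr
    intro e he
    constructor
    · rintro ⟨v, hv, hall⟩
      refine ⟨v, hv, fun φ hφ => ?_⟩
      rcases eq_or_ne φ l with rfl | hne
      · exact himp e he v hv hall
      · exact hall φ (Finset.mem_erase.2 ⟨hne, hφ⟩)
    · exact hmono e
  have hfn : (Epos.filter fun e => ¬ RuleCovers h (S.erase l) e).card ≤
      (Epos.filter fun e => ¬ RuleCovers h S e).card := by
    apply Finset.card_le_card
    intro e he
    rw [Finset.mem_filter] at he ⊢
    exact ⟨he.1, fun hc => he.2 (hmono e hc)⟩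
  have hcard : (S.erase l).card < S.card := Finset.card_erase_lt_of_mem hl
  unfold ruleCost
  rcases lt_or_eq_of_le hfn with hlt | heq
  · exact Prod.Lex.left _ _ (by rw [hfp]; omega)
  · rw [hfp, heq]
    exact Prod.Lex.right _ (by omega)
end
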